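/- In e(p), suppose X = L_{a,a+1} + Σ_j α_j P_j commutes with L_{a,a+1} and with all the other generators of the candidate MASA {L₁₂, L₃₄, …, L_{p-k-1,p-k}, P_{p-k+1},…,P_p}, and suppose the resulting set spans an abelian subalgebra. Then there exists a translation conjugation (element exp(Σ c_j P_j) of E(p)) mapping X to L_{a,a+1}, i.e., all one-cocycles for MASAs of e(p) are coboundaries and no nonsplitting MASAs of e(p) exist. Concretely: conjugating L_{i,i+1} by exp(α_i P_i + α_{i+1} P_{i+1}) gives L_{i,i+1} + α_i P_{i+1} - α_{i+1} P_i. -/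

import Mathlib

open Matrix

noncomputable section

/-- The rotation generator `L_{ij}` in the plane of coordinates `i, j` (0-based)
inside `e(p)` realized as `(p+1)×(p+1)` matrices. -/
def Lrot (p i j : ℕ) : Matrix (Fin (p+1)) (Fin (p+1)) ℝ :=
  Matrix.of fun a b =>
    if (a : ℕ) = i ∧ (b : ℕ) = j then 1
    else if (a : ℕ) = j ∧ (b : ℕ) = i then -1 else 0

/-- The translation generator `P_i` in coordinate `i` (0-based) inside `e(p)`. -/
def Ptr (p i : ℕ) : Matrix (Fin (p+1)) (Fin (p+1)) ℝ :=
  Matrix.of fun a b => if (a : ℕ) = i ∧ (b : ℕ) = p then 1 else 0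

lemma exp_of_sq_zero {ι : Type*} [Fintype ι] [DecidableEq ι]
    (A : Matrix ι ι ℝ) (hA : A * A = 0) :
    NormedSpace.exp A = 1 + A := by
  have h0 : NormedSpace.exp A = ∑' n : ℕ, (n.factorial : ℝ)⁻¹ • A ^ n :=
    congrFun (NormedSpace.exp_eq_tsum ℝ) A
  rw [h0, tsum_eq_sum (s := ({0, 1} : Finset ℕ)) ?_]
  · norm_num [Nat.factorial]
  · intro m hm
    simp only [Finset.mem_insert, Finset.mem_singleton] at hm
    have h2 : 2 ≤ m := by omega
    obtain ⟨k, rfl⟩ := Nat.exists_eq_add_of_le h2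
    rw [pow_add, sq, hA, zero_mul, smul_zero]

lemma Ptr_eq (p i : ℕ) (h : i < p) :
    Ptr p i = Matrix.single (⟨i, by omega⟩ : Fin (p+1)) ⟨p, by omega⟩ (1:ℝ) := by
  ext a b
  simp only [Ptr, Matrix.single, of_apply, Fin.ext_iff]
  aesop

lemma Lrot_eq (p i j : ℕ) (hij : i ≠ j) (h : i < p+1) (h' : j < p+1) :
    Lrot p i j = Matrix.single (⟨i, h⟩ : Fin (p+1)) ⟨j, h'⟩ (1:ℝ)
      - Matrix.single (⟨j, h'⟩ : Fin (p+1)) ⟨i, h⟩ (1:ℝ) := by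
  ext a b
  simp only [Lrot, Matrix.single, of_apply, Matrix.sub_apply, Fin.ext_iff]
  aesop

/-- In `e(p)`, conjugating the rotation `L_{i,i+1}` by the translation
group element `exp(αᵢPᵢ + αᵢ₊₁Pᵢ₊₁)` gives
`L_{i,i+1} + αᵢP_{i+1} - αᵢ₊₁P_i`.  Consequently any one-cocycle attached to
`L_{i,i+1}` is a coboundary: the shifted element `L_{i,i+1} + b₁Pᵢ + b₂Pᵢ₊₁` can be
conjugated back to `L_{i,i+1}` by a translation, so no nonsplitting MASAs of `e(p)`
arise this way. -/
theorem translation_conjugation_of_rotation (p i : ℕ) (hi : i + 1 < p) (c₁ c₂ : ℝ) :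
    (NormedSpace.exp (c₁ • Ptr p i + c₂ • Ptr p (i+1)) * Lrot p i (i+1)
        * NormedSpace.exp (-(c₁ • Ptr p i + c₂ • Ptr p (i+1)))
      = Lrot p i (i+1) + c₁ • Ptr p (i+1) - c₂ • Ptr p i) ∧
    (∀ b₁ b₂ : ℝ, ∃ d₁ d₂ : ℝ,
      NormedSpace.exp (d₁ • Ptr p i + d₂ • Ptr p (i+1))
          * (Lrot p i (i+1) + b₁ • Ptr p i + b₂ • Ptr p (i+1))
          * NormedSpace.exp (-(d₁ • Ptr p i + d₂ • Ptr p (i+1)))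
        = Lrot p i (i+1)) := by
  have hi1 : i < p + 1 := by omega
  have hi2 : i + 1 < p + 1 := by omega
  have hp : p < p + 1 := by omega
  have hIJ : (⟨i, hi1⟩ : Fin (p+1)) ≠ ⟨i+1, hi2⟩ := by simp [Fin.ext_iff]
  have hPI : (⟨p, hp⟩ : Fin (p+1)) ≠ ⟨i, hi1⟩ := by simp [Fin.ext_iff]; omega
  have hPJ : (⟨p, hp⟩ : Fin (p+1)) ≠ ⟨i+1, hi2⟩ := by simp [Fin.ext_iff]; omega
  have hPtr1 : Ptr p i = Matrix.single (⟨i, hi1⟩ : Fin (p+1)) ⟨p, hp⟩ (1:ℝ) :=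
    Ptr_eq p i (by omega)
  have hPtr2 : Ptr p (i+1) = Matrix.single (⟨i+1, hi2⟩ : Fin (p+1)) ⟨p, hp⟩ (1:ℝ) :=
    Ptr_eq p (i+1) (by omega)
  have hL : Lrot p i (i+1)
      = Matrix.single (⟨i, hi1⟩ : Fin (p+1)) ⟨i+1, hi2⟩ (1:ℝ)
        - Matrix.single (⟨i+1, hi2⟩ : Fin (p+1)) ⟨i, hi1⟩ (1:ℝ) :=
    Lrot_eq p i (i+1) (by omega) hi1 hi2
  have hsq : ∀ x y : ℝ, (x • Ptr p i + y • Ptr p (i+1)) * (x • Ptr p i + y • Ptr p (i+1)) = 0 := by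
    intro x y
    simp [hPtr1, hPtr2, add_mul, mul_add, smul_mul_assoc, mul_smul_comm,
      hPI, hPJ, hPI.symm, hPJ.symm]
  have key : ∀ x y b₁ b₂ : ℝ,
      NormedSpace.exp (x • Ptr p i + y • Ptr p (i+1))
        * (Lrot p i (i+1) + b₁ • Ptr p i + b₂ • Ptr p (i+1))
        * NormedSpace.exp (-(x • Ptr p i + y • Ptr p (i+1)))
      = Lrot p i (i+1) + (b₁ - y) • Ptr p i + (b₂ + x) • Ptr p (i+1) := by
    intro x y b₁ b₂
    have hsq' : (-(x • Ptr p i + y • Ptr p (i+1))) * (-(x • Ptr p i + y • Ptr p (i+1))) = 0 := by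
      rw [neg_mul_neg, hsq]
    rw [exp_of_sq_zero _ (hsq x y), exp_of_sq_zero _ hsq']
    rw [hL, hPtr1, hPtr2]
    have n1 : i ≠ i + 1 := by omega
    have n2 : p ≠ i := by omega
    have n3 : p ≠ i + 1 := by omega
    simp only [add_mul, mul_add, sub_mul, mul_sub, one_mul, mul_one, mul_neg, neg_mul,
      smul_mul_assoc, mul_smul_comm, smul_smul]
    simp [single_mul_single_same, single_mul_single_of_ne, Fin.ext_iff,
      n1, n2, n3, n1.symm, n2.symm, n3.symm]
    ext a b
    simp only [Matrix.add_apply, Matrix.sub_apply, Matrix.neg_apply, Matrix.single, of_apply]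
    split_ifs <;> simp_all [Fin.ext_iff] <;> first | ring | omega
  constructor
  · calc NormedSpace.exp (c₁ • Ptr p i + c₂ • Ptr p (i+1)) * Lrot p i (i+1)
          * NormedSpace.exp (-(c₁ • Ptr p i + c₂ • Ptr p (i+1)))
        = NormedSpace.exp (c₁ • Ptr p i + c₂ • Ptr p (i+1))
            * (Lrot p i (i+1) + (0:ℝ) • Ptr p i + (0:ℝ) • Ptr p (i+1))
            * NormedSpace.exp (-(c₁ • Ptr p i + c₂ • Ptr p (i+1))) := by
          simp
      _ = Lrot p i (i+1) + ((0:ℝ) - c₂) • Ptr p i + ((0:ℝ) + c₁) • Ptr p (i+1) := key c₁ c₂ 0 0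
      _ = Lrot p i (i+1) + c₁ • Ptr p (i+1) - c₂ • Ptr p i := by module
  · intro b₁ b₂
    refine ⟨-b₂, b₁, ?_⟩
    rw [key (-b₂) b₁ b₁ b₂]
    simp
end
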